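/- Fix k ≥ 1 and letters a₁,…,a_k ∈ Σ with a_i ≠ a_{i+1} for all 1 ≤ i < k. The MOn-1qfa A[a₁,…,a_k] recognizes the language L[a₁,…,a_k] = Σ* a₁ Σ* ⋯ Σ* a_k Σ* with cut-point λ = 2^{−(2k+1)} isolated by δ = 2^{−2(k+1)}; more precisely, p_{A[a₁,…,a_k]}(w) ≥ 2^{−2k} for every w ∈ L[a₁,…,a_k], and p_{A[a₁,…,a_k]}(w) = 0 for every w ∉ L[a₁,…,a_k]. -/

import Mathlib

open Matrix

/-- A Measure-Only one-way quantum finite automaton (MOn-1qfa) over the alphabet `σ`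
(the letter `none` plays the role of the end-marker `#`).  The data consists of:
the number of states `m`, for each letter `c` (and the end-marker) the number `k c`
of distinct eigenvalues of the observable `O_c`, the eigenvalues `eig c` themselves,
the corresponding orthogonal projectors `P c`, the initial (row) vector `init`,
and the set `F` of (indices of) accepting eigenvalues of the end-marker observable. -/
structure MOnQFA (σ : Type) where
  m : ℕ
  k : Option σ → ℕ
  eig : (c : Option σ) → Fin (k c) → ℝ
  P : (c : Option σ) → Fin (k c) → Matrix (Fin m) (Fin m) ℂ
  init : Matrix (Fin 1) (Fin m) ℂ
  F : Finset (Fin (k none))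

namespace MOnQFA

variable {σ : Type}

/-- Well-formedness of a MOn-1qfa: the eigenvalues of each observable are distinct,
the `P c j` are pairwise orthogonal Hermitian idempotents (orthogonal projectors)
summing to the identity (so that `O_c = ∑ j, eig c j • P c j` is a Hermitian matrix
with spectral decomposition given by the data), and the initial vector has norm 1. -/
def Valid (A : MOnQFA σ) : Prop :=
  (∀ c, Function.Injective (A.eig c)) ∧
  (∀ c j, (A.P c j)ᴴ = A.P c j) ∧
  (∀ c j, A.P c j * A.P c j = A.P c j) ∧
  (∀ c j j', j ≠ j' → A.P c j * A.P c j' = 0) ∧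
  (∀ c, ∑ j, A.P c j = 1) ∧
  (∑ i, Complex.normSq (A.init 0 i) = 1)

/-- The density matrix `σ(w)` reached after reading the word `w`:
`σ(ε) = π₀† π₀` and `σ(yc) = ∑ j, P_j(c) σ(y) P_j(c)`. -/
noncomputable def dens (A : MOnQFA σ) (w : List σ) : Matrix (Fin A.m) (Fin A.m) ℂ :=
  w.foldl (fun ρ c => ∑ j, A.P (some c) j * ρ * A.P (some c) j) (A.initᴴ * A.init)

/-- The acceptance probability `p_A(w) = Tr (∑_{j ∈ F} P_j(#) σ(w) P_j(#))`. -/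
noncomputable def prob (A : MOnQFA σ) (w : List σ) : ℝ :=
  (Matrix.trace (∑ j ∈ A.F, A.P none j * A.dens w * A.P none j)).re

end MOnQFA

/-- `LMO σ` : the class of languages recognized by some MOn-1qfa over `σ`
with an isolated cut-point. -/
def LMO (σ : Type) : Set (Set (List σ)) :=
  {L | ∃ A : MOnQFA σ, A.Valid ∧ ∃ lam δ : ℝ, 0 < lam ∧ 0 < δ ∧
        (∀ w, |A.prob w - lam| ≥ δ) ∧ L = {w | A.prob w > lam}}

/-- `PMO σ` : the class of probabilistic events induced by MOn-1qfas over `σ`. -/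
def PMO (σ : Type) : Set (List σ → ℝ) :=
  {φ | ∃ A : MOnQFA σ, A.Valid ∧ φ = A.prob}

/-- The "up" orthogonal projector `P↗(α)` of dimension `(k+1)×(k+1)` associated with
the word `as = a₁⋯a_k` and the letter `α`: writing `j₁^{(α)} < ⋯ < j_{#α}^{(α)}` for
the (1-based) positions of `α` in `as`, the entry `(r,s)` is `1` if `r = s` and `r`
belongs to no block `{jᵢ^{(α)}, jᵢ^{(α)}+1}`, `1/2` if `r` and `s` belong to a common
block `{jᵢ^{(α)}, jᵢ^{(α)}+1}`, and `0` otherwise.  (Indices here are 0-based: the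
block of a 0-based position `q` with `as.get q = α` is `{q, q+1}`.) -/
noncomputable def upProj {σ : Type} [DecidableEq σ] (as : List σ) (α : σ) :
    Matrix (Fin (as.length + 1)) (Fin (as.length + 1)) ℝ :=
  Matrix.of fun r s =>
    if ∃ q : Fin as.length, as.get q = α ∧
        (r = q.castSucc ∨ r = q.succ) ∧ (s = q.castSucc ∨ s = q.succ) then 1 / 2
    else if r = s then 1 else 0

/-- The "down" orthogonal projector `P↘(α)` of dimension `(k+1)×(k+1)` associated
with the word `as = a₁⋯a_k` and the letter `α`: the entry `(r,s)` is `1/2` if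
`r = s` and `r` belongs to some block `{jᵢ^{(α)}, jᵢ^{(α)}+1}`, `-1/2` if `r ≠ s` and
`r, s` belong to a common block, and `0` otherwise. -/
noncomputable def downProj {σ : Type} [DecidableEq σ] (as : List σ) (α : σ) :
    Matrix (Fin (as.length + 1)) (Fin (as.length + 1)) ℝ :=
  Matrix.of fun r s =>
    if ∃ q : Fin as.length, as.get q = α ∧
        (r = q.castSucc ∨ r = q.succ) ∧ (s = q.castSucc ∨ s = q.succ) then
      (if r = s then 1 / 2 else -(1 / 2))
    else 0

/-- The first standard basis row vector `e₁ ∈ ℝ^{1×(k+1)}`. -/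
noncomputable def e1 {n : ℕ} : Matrix (Fin 1) (Fin (n + 1)) ℝ :=
  Matrix.of fun _ i => if i = 0 then 1 else 0

/-- The MOn-1qfa `A[a₁,…,a_k]` over `Σ` associated with letters `as = a₁⋯a_k`
(with `aᵢ ≠ aᵢ₊₁`): it has `k+1` states, initial state `e₁`, for `α ∈ {a₁,…,a_k}` the
observable with spectral projectors `P↗(α)` and `P↘(α)`, for `c ∉ {a₁,…,a_k}` the
identity observable, and end-marker observable whose single accepting projector is
`P_acc = e_{k+1}ᵀ e_{k+1}`. -/
noncomputable def AutoPT {σ : Type} [DecidableEq σ] (as : List σ) : MOnQFA σ where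
  m := as.length + 1
  k := fun _ => 2
  eig := fun _ j => if j = 0 then 1 else 0
  P := fun c j =>
    match c with
    | none =>
        if j = 0 then
          Matrix.single (Fin.last as.length) (Fin.last as.length) (1 : ℂ)
        else
          1 - Matrix.single (Fin.last as.length) (Fin.last as.length) (1 : ℂ)
    | some a =>
        if a ∈ as then
          (if j = 0 then (upProj as a).map (fun x => (x : ℂ))
           else (downProj as a).map (fun x => (x : ℂ)))
        else (if j = 0 then 1 else 0)
  init := Matrix.of fun _ i => if i = 0 then 1 else 0
  F := {0}


/-!
The state of `AutoPT as` stays diagonal. Measuring the diagonal state with diagonal `d` by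
`{P↗(c), P↘(c)}` yields the diagonal state with diagonal `P↗(c) *ᵥ d`, which averages `d` over
every block `{q, q+1}` with `a_q = c` and leaves the other entries unchanged; the blocks of one
letter are disjoint because consecutive letters differ. Let `l` be the number of letters of `as`
matched greedily by the input read so far. Then `d` is antitone, vanishes beyond `l`, and
`d l ≥ 2⁻ˡ`: reading the next letter to match moves half of `d l` to `d (l+1)`, and every other
averaging only pulls weight down from smaller indices. As `l = k` exactly when `as` is a subword
of the input, the acceptance probability `d k` is at least `2⁻ᵏ ≥ 2⁻²ᵏ` on the language and `0`
off it.
-/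

namespace Matrix

lemma map_ofReal_mul {n : Type*} [Fintype n] (M N : Matrix n n ℝ) :
    (M * N).map (fun x : ℝ => (x : ℂ))
      = M.map (fun x : ℝ => (x : ℂ)) * N.map (fun x : ℝ => (x : ℂ)) :=
  Matrix.map_mul (f := Complex.ofRealHom)

lemma map_ofReal_one_sub {n : Type*} [DecidableEq n] (M : Matrix n n ℝ) :
    (1 - M).map (fun x : ℝ => (x : ℂ)) = 1 - M.map (fun x : ℝ => (x : ℂ)) := by
  rw [Matrix.map_sub _ Complex.ofReal_sub, Matrix.map_one _ Complex.ofReal_zero Complex.ofReal_one]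

end Matrix

lemma IsStarProjection.map_ofReal {n : Type*} [Fintype n] {M : Matrix n n ℝ}
    (h : IsStarProjection M) : IsStarProjection (M.map (fun x : ℝ => (x : ℂ))) where
  isIdempotentElem := by rw [IsIdempotentElem, ← Matrix.map_ofReal_mul, h.isIdempotentElem.eq]
  isSelfAdjoint := (isHermitian_iff_isSelfAdjoint.mpr h.isSelfAdjoint).map _
    fun x => (Complex.conj_ofReal x).symm

namespace AutoPT

section Blocks

variable {σ : Type} {as : List σ}

abbrev InBlock {n : ℕ} (q : Fin n) (r : Fin (n + 1)) : Prop := r = q.castSucc ∨ r = q.succ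

lemma inBlock_iff_val {n : ℕ} {q : Fin n} {r : Fin (n + 1)} :
    InBlock q r ↔ (r : ℕ) = q ∨ (r : ℕ) = q + 1 := by
  simp [InBlock, Fin.ext_iff]

lemma sum_ite_inBlock {M : Type*} [AddCommMonoid M] {n : ℕ} (q : Fin n)
    (f : Fin (n + 1) → M) :
    ∑ t, (if InBlock q t then f t else 0) = f q.castSucc + f q.succ := by
  rw [Fintype.sum_eq_add q.castSucc q.succ (Fin.castSucc_lt_succ).ne
    fun t ht => if_neg (not_or.2 ht)]
  simp

lemma eq_of_inBlock (hch : as.IsChain (· ≠ ·)) {q q' : Fin as.length}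
    (hq : as.get q = as.get q') {r : Fin (as.length + 1)} (h : InBlock q r)
    (h' : InBlock q' r) : q = q' := by
  have hne := List.isChain_iff_getElem.mp hch
  rw [inBlock_iff_val] at h h'
  simp only [List.get_eq_getElem] at hq
  rw [Fin.ext_iff]
  rcases h with h | h <;> rcases h' with h' | h' <;> try omega
  · exact absurd (hq.symm.trans (by congr 1; omega)) (hne q' (by omega))
  · exact absurd (hq.trans (by congr 1; omega)) (hne q (by omega))

variable [DecidableEq σ] {c : σ}

lemma upProj_apply_of_inBlock (hch : as.IsChain (· ≠ ·)) {q : Fin as.length}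
    (hq : as.get q = c) {r : Fin (as.length + 1)} (hr : InBlock q r) (t : Fin (as.length + 1)) :
    upProj as c r t = if InBlock q t then 1 / 2 else 0 := by
  by_cases ht : InBlock q t
  · rw [upProj, of_apply, if_pos ⟨q, hq, hr, ht⟩, if_pos ht]
  · have hex : ¬∃ q', as.get q' = c ∧ InBlock q' r ∧ InBlock q' t := by
      rintro ⟨q', hq', hr', ht'⟩
      exact ht (eq_of_inBlock hch (hq'.trans hq.symm) hr' hr ▸ ht')
    rw [upProj, of_apply, if_neg hex, if_neg ht, if_neg fun hrt : r = t => ht (hrt ▸ hr)]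

lemma upProj_apply_of_forall_not_inBlock {r : Fin (as.length + 1)}
    (hr : ∀ q, as.get q = c → ¬InBlock q r) (t : Fin (as.length + 1)) :
    upProj as c r t = if r = t then 1 else 0 := by
  rw [upProj, of_apply, if_neg fun ⟨q, hq, hqr, _⟩ => hr q hq hqr]

lemma upProj_symm (r s : Fin (as.length + 1)) : upProj as c r s = upProj as c s r := by
  simp only [upProj, of_apply]
  exact if_congr ⟨fun ⟨q, h, hr, hs⟩ => ⟨q, h, hs, hr⟩, fun ⟨q, h, hs, hr⟩ => ⟨q, h, hr, hs⟩⟩ rfl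
    (if_congr eq_comm rfl rfl)

lemma downProj_eq_one_sub_upProj : downProj as c = 1 - upProj as c := by
  ext r s
  simp only [downProj, upProj, Matrix.sub_apply, one_apply, of_apply]
  split_ifs <;> norm_num

lemma upProj_eq_one_of_not_mem (hc : c ∉ as) : upProj as c = 1 := by
  ext r s
  have hfree : ∀ q, as.get q = c → ¬InBlock q r := fun q hq _ => hc (hq ▸ as.get_mem q)
  rw [upProj_apply_of_forall_not_inBlock hfree, one_apply]

lemma downProj_apply_of_inBlock (hch : as.IsChain (· ≠ ·)) {q : Fin as.length}
    (hq : as.get q = c) {r : Fin (as.length + 1)} (hr : InBlock q r) (t : Fin (as.length + 1)) :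
    downProj as c r t = if InBlock q t then (if r = t then 1 / 2 else -(1 / 2)) else 0 := by
  rw [downProj_eq_one_sub_upProj, Matrix.sub_apply, one_apply, upProj_apply_of_inBlock hch hq hr]
  by_cases ht : InBlock q t
  · simp only [if_pos ht]; split_ifs <;> norm_num
  · simp only [if_neg ht, if_neg fun hrt : r = t => ht (hrt ▸ hr), sub_zero]

lemma downProj_apply_of_forall_not_inBlock {r : Fin (as.length + 1)}
    (hr : ∀ q, as.get q = c → ¬InBlock q r) (t : Fin (as.length + 1)) :
    downProj as c r t = 0 := by
  rw [downProj_eq_one_sub_upProj, Matrix.sub_apply, one_apply,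
    upProj_apply_of_forall_not_inBlock hr, sub_self]

lemma upProj_mul_self (hch : as.IsChain (· ≠ ·)) : upProj as c * upProj as c = upProj as c := by
  ext r s
  rw [mul_apply]
  by_cases hr : ∃ q, as.get q = c ∧ InBlock q r
  · obtain ⟨q, hq, hr⟩ := hr
    have hU := fun r (h : InBlock q r) => upProj_apply_of_inBlock hch hq h
    simp only [hU r hr, ite_mul, zero_mul, sum_ite_inBlock]
    rw [hU _ (Or.inl rfl), hU _ (Or.inr rfl)]
    split_ifs <;> norm_num
  · simp only [not_exists, not_and] at hr
    simp [upProj_apply_of_forall_not_inBlock hr]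

lemma isStarProjection_upProj (hch : as.IsChain (· ≠ ·)) : IsStarProjection (upProj as c) where
  isIdempotentElem := upProj_mul_self hch
  isSelfAdjoint := by
    ext r s
    exact upProj_symm s r

lemma upProj_mulVec_of_inBlock (hch : as.IsChain (· ≠ ·)) {q : Fin as.length}
    (hq : as.get q = c) {r : Fin (as.length + 1)} (hr : InBlock q r) (d : Fin (as.length + 1) → ℝ) :
    (upProj as c *ᵥ d) r = (d q.castSucc + d q.succ) / 2 := by
  simp only [mulVec, dotProduct, upProj_apply_of_inBlock hch hq hr, ite_mul, zero_mul,
    sum_ite_inBlock]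
  ring

lemma upProj_mulVec_of_forall_not_inBlock {r : Fin (as.length + 1)}
    (hr : ∀ q, as.get q = c → ¬InBlock q r) (d : Fin (as.length + 1) → ℝ) :
    (upProj as c *ᵥ d) r = d r := by
  simp [mulVec, dotProduct, upProj_apply_of_forall_not_inBlock hr]

lemma upProj_diagonal_upProj_add_downProj_diagonal_downProj (hch : as.IsChain (· ≠ ·))
    (d : Fin (as.length + 1) → ℝ) :
    upProj as c * diagonal d * upProj as c + downProj as c * diagonal d * downProj as c
      = diagonal (upProj as c *ᵥ d) := by
  ext r s
  have expand : ∀ M N : Matrix (Fin (as.length + 1)) (Fin (as.length + 1)) ℝ,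
      (M * diagonal d * N) r s = ∑ t, M r t * d t * N t s := fun M N => by
    rw [mul_apply]
    simp only [mul_diagonal]
  rw [Matrix.add_apply, expand, expand, diagonal_apply]
  by_cases hr : ∃ q, as.get q = c ∧ InBlock q r
  · obtain ⟨q, hq, hr⟩ := hr
    have hU := fun r (h : InBlock q r) => upProj_apply_of_inBlock hch hq h
    have hD := fun r (h : InBlock q r) => downProj_apply_of_inBlock hch hq h
    simp only [hU r hr, hD r hr, ite_mul, zero_mul, sum_ite_inBlock]
    rw [hU _ (Or.inl rfl), hU _ (Or.inr rfl), hD _ (Or.inl rfl), hD _ (Or.inr rfl),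
      upProj_mulVec_of_inBlock hch hq hr]
    by_cases hs : InBlock q s
    · rcases hr with rfl | rfl <;> rcases hs with rfl | rfl <;>
        simp [InBlock, Fin.castSucc_lt_succ.ne, Fin.castSucc_lt_succ.ne'] <;> ring
    · have hrs : r ≠ s := fun h => hs (h ▸ hr)
      simp [hs, hrs]
  · simp only [not_exists, not_and] at hr
    simp [upProj_apply_of_forall_not_inBlock hr, downProj_apply_of_forall_not_inBlock hr,
      upProj_mulVec_of_forall_not_inBlock hr]

lemma le_upProj_mulVec (hch : as.IsChain (· ≠ ·)) {d : Fin (as.length + 1) → ℝ}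
    (hd : Antitone d) {r : Fin (as.length + 1)} (hr : ∀ q, as.get q = c → r ≠ q.castSucc) :
    d r ≤ (upProj as c *ᵥ d) r := by
  by_cases h : ∃ q, as.get q = c ∧ InBlock q r
  · obtain ⟨q, hq, hqr | rfl⟩ := h
    · exact absurd hqr (hr q hq)
    · have := hd (Fin.castSucc_lt_succ (i := q)).le
      rw [upProj_mulVec_of_inBlock hch hq (Or.inr rfl)]
      linarith
  · simp only [not_exists, not_and] at h
    rw [upProj_mulVec_of_forall_not_inBlock h]

lemma upProj_mulVec_le (hch : as.IsChain (· ≠ ·)) {d : Fin (as.length + 1) → ℝ}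
    (hd : Antitone d) {r : Fin (as.length + 1)} (hr : ∀ q, as.get q = c → r ≠ q.succ) :
    (upProj as c *ᵥ d) r ≤ d r := by
  by_cases h : ∃ q, as.get q = c ∧ InBlock q r
  · obtain ⟨q, hq, rfl | hqr⟩ := h
    · have := hd (Fin.castSucc_lt_succ (i := q)).le
      rw [upProj_mulVec_of_inBlock hch hq (Or.inl rfl)]
      linarith
    · exact absurd hqr (hr q hq)
  · simp only [not_exists, not_and] at h
    rw [upProj_mulVec_of_forall_not_inBlock h]

lemma antitone_upProj_mulVec (hch : as.IsChain (· ≠ ·)) {d : Fin (as.length + 1) → ℝ}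
    (hd : Antitone d) : Antitone (upProj as c *ᵥ d) := by
  rw [Fin.antitone_iff_succ_le]
  intro q
  by_cases hq : as.get q = c
  · rw [upProj_mulVec_of_inBlock hch hq (Or.inr rfl),
      upProj_mulVec_of_inBlock hch hq (Or.inl rfl)]
  · calc (upProj as c *ᵥ d) q.succ ≤ d q.succ :=
          upProj_mulVec_le hch hd fun q' hq' h => hq (Fin.succ_injective _ h ▸ hq')
      _ ≤ d q.castSucc := hd Fin.castSucc_lt_succ.le
      _ ≤ (upProj as c *ᵥ d) q.castSucc :=
          le_upProj_mulVec hch hd fun q' hq' h => hq (Fin.castSucc_injective _ h ▸ hq')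

end Blocks

section Matching

variable {σ : Type} [DecidableEq σ] {as : List σ} {c : σ}

def matchStep (as : List σ) (l : ℕ) (c : σ) : ℕ := if as[l]? = some c then l + 1 else l

def matchLevel (as w : List σ) : ℕ := w.foldl (matchStep as) 0

lemma le_matchStep (l : ℕ) (c : σ) : l ≤ matchStep as l c := by
  unfold matchStep; split_ifs <;> omega

lemma matchStep_le {l : ℕ} (hl : l ≤ as.length) (c : σ) : matchStep as l c ≤ as.length := by
  unfold matchStep
  split_ifs with h
  · exact (List.getElem?_eq_some_iff.mp h).1
  · exact hl

lemma matchStep_of_get {q : Fin as.length} (hq : as.get q = c) : matchStep as q c = q + 1 := by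
  simp [matchStep, ← hq]

lemma foldl_matchStep_le (w : List σ) {l : ℕ} (hl : l ≤ as.length) :
    w.foldl (matchStep as) l ≤ as.length := by
  induction w generalizing l with
  | nil => exact hl
  | cons c w ih => exact ih (matchStep_le hl c)

lemma foldl_matchStep_eq_length_iff (w : List σ) {l : ℕ} (hl : l ≤ as.length) :
    w.foldl (matchStep as) l = as.length ↔ (as.drop l).Sublist w := by
  induction w generalizing l with
  | nil => simp [List.drop_eq_nil_iff]; omega
  | cons c w ih =>
    rw [List.foldl_cons]
    by_cases h : as[l]? = some c
    · obtain ⟨hlt, hget⟩ := List.getElem?_eq_some_iff.mp h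
      rw [matchStep, if_pos h, ih hlt, List.drop_eq_getElem_cons hlt, hget,
        List.cons_sublist_cons]
    · rw [matchStep, if_neg h, ih hl, List.sublist_cons_iff, iff_self_or]
      rintro ⟨r, hr, hsub⟩
      exact absurd (by rw [← List.head?_drop, hr]; rfl) h

lemma matchLevel_le (w : List σ) : matchLevel as w ≤ as.length :=
  foldl_matchStep_le w (Nat.zero_le _)

lemma matchLevel_eq_length_iff (w : List σ) : matchLevel as w = as.length ↔ as.Sublist w := by
  rw [matchLevel, foldl_matchStep_eq_length_iff w (Nat.zero_le _), List.drop_zero]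

end Matching

section Invariant

variable {σ : Type} {as : List σ}

structure WeightInv (as : List σ) (l : ℕ) (d : Fin (as.length + 1) → ℝ) : Prop where
  antitone : Antitone d
  eq_zero_of_lt : ∀ i : Fin (as.length + 1), l < i → d i = 0
  inv_two_pow_le : ∀ i : Fin (as.length + 1), (i : ℕ) = l → (2 ^ l)⁻¹ ≤ d i

lemma weightInv_zero : WeightInv as 0 (Pi.single 0 1) where
  antitone i j hij := by
    rcases eq_or_ne j 0 with rfl | hj
    · rw [nonpos_iff_eq_zero.mp hij]
    · rw [Pi.single_eq_of_ne hj, Pi.single_apply]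
      split_ifs <;> norm_num
  eq_zero_of_lt i hi := Pi.single_eq_of_ne (Fin.pos_iff_ne_zero.mp hi) 1
  inv_two_pow_le i hi := by
    obtain rfl : i = 0 := Fin.ext hi
    simp

variable [DecidableEq σ]

lemma WeightInv.step (hch : as.IsChain (· ≠ ·)) {l : ℕ} {d : Fin (as.length + 1) → ℝ}
    (h : WeightInv as l d) (c : σ) : WeightInv as (matchStep as l c) (upProj as c *ᵥ d) where
  antitone := antitone_upProj_mulVec hch h.antitone
  eq_zero_of_lt i hi := by
    have hli : l < i := (le_matchStep l c).trans_lt hi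
    by_cases hb : ∃ q, as.get q = c ∧ InBlock q i
    · obtain ⟨q, hq, hqi⟩ := hb
      -- a block of `c` starting at `l` would have advanced the level
      have hlq : l < q := by
        by_contra hql
        have hstep := matchStep_of_get hq
        rw [inBlock_iff_val] at hqi
        rw [show (q : ℕ) = l by omega] at hstep
        omega
      rw [upProj_mulVec_of_inBlock hch hq hqi, h.eq_zero_of_lt _ hlq,
        h.eq_zero_of_lt _ (by simp only [Fin.val_succ]; omega), add_zero, zero_div]
    · simp only [not_exists, not_and] at hb
      rw [upProj_mulVec_of_forall_not_inBlock hb, h.eq_zero_of_lt i hli]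
  inv_two_pow_le i hi := by
    by_cases hc : as[l]? = some c
    · obtain ⟨hlt, hget⟩ := List.getElem?_eq_some_iff.mp hc
      rw [matchStep, if_pos hc] at hi ⊢
      obtain rfl : i = (⟨l, hlt⟩ : Fin as.length).succ := Fin.ext hi
      rw [upProj_mulVec_of_inBlock hch hget (Or.inr rfl), h.eq_zero_of_lt (Fin.succ _) (by simp),
        pow_succ, mul_inv, add_zero, div_eq_mul_inv]
      gcongr
      exact h.inv_two_pow_le _ rfl
    · rw [matchStep, if_neg hc] at hi ⊢
      refine (h.inv_two_pow_le i hi).trans (le_upProj_mulVec hch h.antitone fun q hq hiq => hc ?_)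
      obtain rfl : (q : ℕ) = l := by rw [← hi, hiq, Fin.val_castSucc]
      simp [← hq]

noncomputable def weights (as w : List σ) : Fin (as.length + 1) → ℝ :=
  w.foldl (fun d c => upProj as c *ᵥ d) (Pi.single 0 1)

lemma weightInv_weights (hch : as.IsChain (· ≠ ·)) (w : List σ) :
    WeightInv as (matchLevel as w) (weights as w) := by
  induction w using List.reverseRecOn with
  | nil => exact weightInv_zero
  | append_singleton w c ih =>
    rw [matchLevel, weights, List.foldl_concat, List.foldl_concat]
    exact ih.step hch c

end Invariant

section Automaton

variable {σ : Type} [DecidableEq σ] {as : List σ}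

noncomputable def projOne (as : List σ) :
    Option σ → Matrix (Fin (as.length + 1)) (Fin (as.length + 1)) ℂ
  | none => single (Fin.last _) (Fin.last _) 1
  | some c => (upProj as c).map (fun x : ℝ => (x : ℂ))

lemma isStarProjection_projOne (hch : as.IsChain (· ≠ ·)) :
    ∀ c, IsStarProjection (projOne as c)
  | none => ⟨by simp [IsIdempotentElem, projOne],
      by simp [IsSelfAdjoint, projOne, star_eq_conjTranspose]⟩
  | some _ => (isStarProjection_upProj hch).map_ofReal

-- `(AutoPT as).P` at its computed type, so that it multiplies with other `(k+1)×(k+1)` matrices.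
noncomputable def proj (as : List σ) (c : Option σ) (j : Fin 2) :
    Matrix (Fin (as.length + 1)) (Fin (as.length + 1)) ℂ :=
  (AutoPT as).P c j

lemma proj_eq (c : Option σ) (j : Fin 2) :
    proj as c j = if j = 0 then projOne as c else 1 - projOne as c := by
  rcases c with _ | c
  · rfl
  · by_cases hc : c ∈ as
    · simp [proj, AutoPT, projOne, hc, downProj_eq_one_sub_upProj, map_ofReal_one_sub]
    · simp [proj, AutoPT, projOne, hc, upProj_eq_one_of_not_mem hc]

lemma isStarProjection_proj (hch : as.IsChain (· ≠ ·)) (c : Option σ) (j : Fin 2) :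
    IsStarProjection (proj as c j) := by
  rw [proj_eq]
  split_ifs
  exacts [isStarProjection_projOne hch c, (isStarProjection_projOne hch c).one_sub]

lemma proj_mul_proj_of_ne (hch : as.IsChain (· ≠ ·)) (c : Option σ) {j j' : Fin 2}
    (h : j ≠ j') : proj as c j * proj as c j' = 0 := by
  have hP := (isStarProjection_projOne hch c).isIdempotentElem
  obtain ⟨rfl, rfl⟩ | ⟨rfl, rfl⟩ : j = 0 ∧ j' = 1 ∨ j = 1 ∧ j' = 0 := by omega
  · simpa [proj_eq] using hP.mul_one_sub_self
  · simpa [proj_eq] using hP.one_sub_mul_self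

lemma sum_proj (c : Option σ) : ∑ j, proj as c j = 1 := by
  simp [Fin.sum_univ_two, proj_eq]

lemma valid (hch : as.IsChain (· ≠ ·)) : (AutoPT as).Valid := by
  refine ⟨fun _ j j' => ?_, fun c j => (isStarProjection_proj hch c j).isSelfAdjoint,
    fun c j => (isStarProjection_proj hch c j).isIdempotentElem,
    fun c _ _ h => proj_mul_proj_of_ne hch c h, sum_proj, ?_⟩
  · fin_cases j <;> fin_cases j' <;> simp [AutoPT]
  · simp [AutoPT, apply_ite Complex.normSq]
    exact Finset.mem_univ _

lemma sum_proj_mul_diagonal_mul_proj (hch : as.IsChain (· ≠ ·)) (c : σ)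
    (d : Fin (as.length + 1) → ℝ) :
    ∑ j, proj as (some c) j * (diagonal d).map (fun x : ℝ => (x : ℂ)) * proj as (some c) j
      = (diagonal (upProj as c *ᵥ d)).map (fun x : ℝ => (x : ℂ)) := by
  rw [← upProj_diagonal_upProj_add_downProj_diagonal_downProj hch d,
    Matrix.map_add _ Complex.ofReal_add, map_ofReal_mul, map_ofReal_mul, map_ofReal_mul,
    map_ofReal_mul, downProj_eq_one_sub_upProj, map_ofReal_one_sub, Fin.sum_univ_two]
  simp [proj_eq, projOne]

lemma dens_eq (hch : as.IsChain (· ≠ ·)) (w : List σ) :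
    (AutoPT as).dens w = (diagonal (weights as w)).map (fun x : ℝ => (x : ℂ)) := by
  let e₁ : Matrix (Fin 1) (Fin (as.length + 1)) ℂ := of fun _ i => if i = 0 then 1 else 0
  have he₁ : e₁ᴴ * e₁ = (diagonal (Pi.single 0 1)).map (fun x : ℝ => (x : ℂ)) := by
    ext i j
    simp only [e₁, mul_apply, conjTranspose_apply, of_apply, Fin.sum_univ_one, map_apply,
      diagonal_apply, Pi.single_apply]
    split_ifs <;> simp_all
  change w.foldl (fun ρ c => ∑ j, proj as (some c) j * ρ * proj as (some c) j) (e₁ᴴ * e₁) = _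
  rw [he₁, weights]
  exact List.foldl_hom (fun d => (diagonal d).map (fun x : ℝ => (x : ℂ)))
    (g₁ := fun d c => upProj as c *ᵥ d) fun d c => sum_proj_mul_diagonal_mul_proj hch c d

lemma prob_eq (hch : as.IsChain (· ≠ ·)) (w : List σ) :
    (AutoPT as).prob w = weights as w (Fin.last _) := by
  rw [MOnQFA.prob, dens_eq hch]
  change (trace (∑ j ∈ {0},
    proj as none j * (diagonal (weights as w)).map (fun x : ℝ => (x : ℂ)) * proj as none j)).re = _
  simp [proj_eq, projOne]

lemma inv_two_pow_le_prob (hch : as.IsChain (· ≠ ·)) {w : List σ} (h : as.Sublist w) :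
    (2 ^ as.length)⁻¹ ≤ (AutoPT as).prob w := by
  have hlevel := (matchLevel_eq_length_iff w).mpr h
  rw [prob_eq hch]
  simpa [hlevel] using (weightInv_weights hch w).inv_two_pow_le (Fin.last _) (by simp [hlevel])

lemma prob_eq_zero (hch : as.IsChain (· ≠ ·)) {w : List σ} (h : ¬as.Sublist w) :
    (AutoPT as).prob w = 0 := by
  have hlevel := (matchLevel_eq_length_iff w).not.mpr h
  have := matchLevel_le (as := as) w
  rw [prob_eq hch]
  exact (weightInv_weights hch w).eq_zero_of_lt _ (by simp; omega)

end Automaton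

end AutoPT

theorem autoPT_recognizes
    (σ : Type) [DecidableEq σ]
    (as : List σ) (hchain : as.Chain' (· ≠ ·)) :
    (AutoPT as).Valid ∧
    (∀ w : List σ, as.Sublist w →
      (AutoPT as).prob w ≥ (2 : ℝ) ^ (-(2 * (as.length : ℤ)))) ∧
    (∀ w : List σ, ¬ as.Sublist w → (AutoPT as).prob w = 0) ∧
    (∀ w : List σ,
      |(AutoPT as).prob w - (2 : ℝ) ^ (-(2 * (as.length : ℤ) + 1))| ≥
        (2 : ℝ) ^ (-(2 * ((as.length : ℤ) + 1)))) ∧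
    {w : List σ | (AutoPT as).prob w > (2 : ℝ) ^ (-(2 * (as.length : ℤ) + 1))} =
      {w : List σ | as.Sublist w} := by
  set t : ℝ := 2 ^ (-(2 * ((as.length : ℤ) + 1))) with ht
  have ht_pos : 0 < t := by positivity
  have hcut : (2 : ℝ) ^ (-(2 * (as.length : ℤ) + 1)) = 2 * t := by
    rw [ht, ← zpow_one_add₀ two_ne_zero]
    ring_nf
  have hbound : (2 : ℝ) ^ (-(2 * (as.length : ℤ))) = 4 * t := by
    rw [ht, show (4 : ℝ) = 2 ^ (2 : ℤ) by norm_num, ← zpow_add₀ two_ne_zero]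
    ring_nf
  have hacc : ∀ w, as.Sublist w → (2 : ℝ) ^ (-(2 * (as.length : ℤ))) ≤ (AutoPT as).prob w := by
    refine fun w h => le_trans ?_ (AutoPT.inv_two_pow_le_prob hchain h)
    rw [← zpow_natCast, ← _root_.zpow_neg]
    exact zpow_le_zpow_right₀ one_le_two (by omega)
  have hrej := fun w => AutoPT.prob_eq_zero hchain (w := w)
  have hdich : ∀ w, (4 * t ≤ (AutoPT as).prob w ∧ as.Sublist w) ∨
      ((AutoPT as).prob w = 0 ∧ ¬as.Sublist w) := fun w =>
    (em (as.Sublist w)).imp (fun h => ⟨hbound ▸ hacc w h, h⟩) fun h => ⟨hrej w h, h⟩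
  refine ⟨AutoPT.valid hchain, hacc, hrej, fun w => ?_, Set.ext fun w => ?_⟩
  · rw [hcut, ge_iff_le, le_abs]
    rcases hdich w with ⟨hp, -⟩ | ⟨hp, -⟩
    · left; linarith
    · right; linarith
  · rw [Set.mem_ofPred_eq, Set.mem_ofPred_eq, hcut]
    rcases hdich w with ⟨hp, h⟩ | ⟨hp, h⟩
    · exact iff_of_true (by linarith) h
    · exact iff_of_false (by linarith) h
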